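/- arXiv:2305.12872 — 2 statements merged into one kernel-verified Lean document; each statement's English description precedes it below -/
import Mathlib

section
/- Let Z be a nonempty finite type, let γ be a real number with 0 ≤ γ < 1, and let Π and Π̂ be nonempty types. Let r : Π → Π̂ → Z → ℝ be uniformly bounded, and let P : Π → Π̂ → Z → Z → ℝ satisfy P π π̂ z z' ≥ 0 and ∑_{z'} P π π̂ z z' = 1 for all π, π̂, z. Define T : (Z → ℝ) → (Z → ℝ) by (T Q)(z) = ⨆_{π} ⨅_{π̂} ( r π π̂ z + γ · ∑_{z'} P π π̂ z z' · Q z' ). Then there exists a unique Q* : Z → ℝ with T Q* = Q*, and for every Q : Z → ℝ and every n ∈ ℕ, max_{z ∈ Z} |T^[n] Q z − Q* z| ≤ γⁿ · max_{z ∈ Z} |Q z − Q* z|; in particular the iterates T^[n] Q converge to Q*. -/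
/-!
Taking a supremum or an infimum of a family of reals moves by at most `ε` when every member
moves by at most `ε`, and averaging against a probability vector does not increase the sup norm.
Hence the robust Harsanyi–Bellman operator is a `γ`-contraction of `Z → ℝ` with the sup metric,
and the Banach fixed point theorem gives the unique fixed point `Q*` together with the geometric
rate `dist (T^[n] Q) Q* ≤ γ ^ n * dist Q Q*`.
-/

open Set Finset

theorem dist_pi_eq_sup' {β : Type*} [Fintype β] [Nonempty β] {X : β → Type*}
    [∀ b, PseudoMetricSpace (X b)] (f g : ∀ b, X b) :
    dist f g = univ.sup' univ_nonempty fun b => dist (f b) (g b) :=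
  le_antisymm (dist_pi_le_iff'.2 fun b => le_sup' (fun b => dist (f b) (g b)) (mem_univ b))
    (sup'_le _ _ fun b _ => dist_le_pi_dist f g b)

theorem ContractingWith.dist_iterate_fixedPoint_le {α : Type*} [MetricSpace α] [Nonempty α]
    [CompleteSpace α] {K : NNReal} {f : α → α} (hf : ContractingWith K f) (x : α) (n : ℕ) :
    dist (f^[n] x) (fixedPoint f hf) ≤ K ^ n * dist x (fixedPoint f hf) := by
  have h := (hf.toLipschitzWith.iterate n).dist_le_mul x (fixedPoint f hf)
  rwa [(hf.fixedPoint_isFixedPt.iterate n).eq, NNReal.coe_pow] at h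

theorem abs_sum_mul_le_norm {Z : Type*} [Fintype Z] {w : Z → ℝ} (hw0 : ∀ z, 0 ≤ w z)
    (hw1 : ∑ z, w z ≤ 1) (v : Z → ℝ) : |∑ z, w z * v z| ≤ ‖v‖ :=
  calc |∑ z, w z * v z| ≤ ∑ z, w z * |v z| := by
        simpa only [abs_mul, abs_of_nonneg (hw0 _)] using
          abs_sum_le_sum_abs (fun z => w z * v z) univ
    _ ≤ ∑ z, w z * ‖v‖ :=
        sum_le_sum fun z _ => mul_le_mul_of_nonneg_left (norm_le_pi_norm v z) (hw0 z)
    _ ≤ ‖v‖ := by rw [← sum_mul]; exact mul_le_of_le_one_left (norm_nonneg v) hw1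

namespace Real

variable {ι : Sort*}

theorem iInf_eq_neg_iSup_neg (f : ι → ℝ) : ⨅ i, f i = -⨆ i, -f i := by
  rw [iInf, iSup, sInf_def, neg_range]

/- If one family is unbounded above, so is the other, and both suprema are `0` by convention. -/
theorem abs_iSup_sub_iSup_le {f g : ι → ℝ} {ε : ℝ} (hε : 0 ≤ ε)
    (h : ∀ i, |f i - g i| ≤ ε) : |(⨆ i, f i) - ⨆ i, g i| ≤ ε := by
  rcases isEmpty_or_nonempty ι with _ | _
  · simpa using hε
  have hfg i : f i ≤ g i + ε := by linarith [(abs_sub_le_iff.1 (h i)).1]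
  have hgf i : g i ≤ f i + ε := by linarith [(abs_sub_le_iff.1 (h i)).2]
  by_cases hf : BddAbove (range f)
  · have hg : BddAbove (range g) := by
      obtain ⟨b, hb⟩ := hf
      exact ⟨b + ε, forall_mem_range.2 fun i => by linarith [hgf i, hb (mem_range_self i)]⟩
    rw [abs_sub_le_iff, sub_le_iff_le_add, sub_le_iff_le_add]
    exact ⟨ciSup_le fun i => by linarith [hfg i, le_ciSup hg i],
      ciSup_le fun i => by linarith [hgf i, le_ciSup hf i]⟩
  · have hg : ¬BddAbove (range g) := fun ⟨b, hb⟩ =>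
      hf ⟨b + ε, forall_mem_range.2 fun i => by linarith [hfg i, hb (mem_range_self i)]⟩
    simpa [iSup_of_not_bddAbove hf, iSup_of_not_bddAbove hg] using hε

theorem abs_iInf_sub_iInf_le {f g : ι → ℝ} {ε : ℝ} (hε : 0 ≤ ε)
    (h : ∀ i, |f i - g i| ≤ ε) : |(⨅ i, f i) - ⨅ i, g i| ≤ ε := by
  rw [iInf_eq_neg_iSup_neg f, iInf_eq_neg_iSup_neg g, neg_sub_neg, abs_sub_comm]
  exact abs_iSup_sub_iSup_le hε fun i => by rw [neg_sub_neg, abs_sub_comm]; exact h i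

end Real

section RobustBellman

variable {Z Pol Adv : Type*} [Fintype Z] {γ : ℝ} {r : Pol → Adv → Z → ℝ}
  {P : Pol → Adv → Z → Z → ℝ}

noncomputable def robustBellman (γ : ℝ) (r : Pol → Adv → Z → ℝ) (P : Pol → Adv → Z → Z → ℝ)
    (Q : Z → ℝ) (z : Z) : ℝ :=
  ⨆ p, ⨅ q, r p q z + γ * ∑ z', P p q z z' * Q z'

theorem robustBellman_lipschitzWith (hγ : 0 ≤ γ) (hP0 : ∀ p q z z', 0 ≤ P p q z z')
    (hP1 : ∀ p q z, ∑ z', P p q z z' = 1) :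
    LipschitzWith ⟨γ, hγ⟩ (robustBellman γ r P) := by
  refine LipschitzWith.of_dist_le_mul fun Q Q' => ?_
  have hε : 0 ≤ γ * dist Q Q' := by positivity
  refine (dist_pi_le_iff hε).2 fun z => ?_
  refine Real.abs_iSup_sub_iSup_le hε fun p => Real.abs_iInf_sub_iInf_le hε fun q => ?_
  calc |r p q z + γ * ∑ z', P p q z z' * Q z' - (r p q z + γ * ∑ z', P p q z z' * Q' z')|
      = γ * |∑ z', P p q z z' * (Q - Q') z'| := by
        rw [add_sub_add_left_eq_sub, ← mul_sub, abs_mul, abs_of_nonneg hγ]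
        simp only [Pi.sub_apply, mul_sub, sum_sub_distrib]
    _ ≤ γ * dist Q Q' := by
        rw [dist_eq_norm]
        gcongr
        exact abs_sum_mul_le_norm (hP0 p q z) (hP1 p q z).le _

theorem robustBellman_contractingWith (hγ0 : 0 ≤ γ) (hγ1 : γ < 1)
    (hP0 : ∀ p q z z', 0 ≤ P p q z z') (hP1 : ∀ p q z, ∑ z', P p q z z' = 1) :
    ContractingWith ⟨γ, hγ0⟩ (robustBellman γ r P) :=
  ⟨hγ1, robustBellman_lipschitzWith hγ0 hP0 hP1⟩

end RobustBellman

theorem robust_harsanyi_bellman_convergence_general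
    {Z : Type*} [Fintype Z] [Nonempty Z]
    {Pol Adv : Type*}
    (γ : ℝ) (hγ0 : 0 ≤ γ) (hγ1 : γ < 1)
    (r : Pol → Adv → Z → ℝ)
    (P : Pol → Adv → Z → Z → ℝ)
    (hP0 : ∀ p q z z', 0 ≤ P p q z z')
    (hP1 : ∀ p q z, ∑ z' : Z, P p q z z' = 1)
    (T : (Z → ℝ) → (Z → ℝ))
    (hT : ∀ Q z, T Q z =
      ⨆ p : Pol, ⨅ q : Adv, (r p q z + γ * ∑ z' : Z, P p q z z' * Q z')) :
    ∃ Qstar : Z → ℝ, T Qstar = Qstar ∧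
      (∀ Q : Z → ℝ, T Q = Q → Q = Qstar) ∧
      (∀ (Q : Z → ℝ) (n : ℕ),
        (Finset.univ.sup' Finset.univ_nonempty fun z : Z => |T^[n] Q z - Qstar z|) ≤
          γ ^ n * (Finset.univ.sup' Finset.univ_nonempty fun z : Z => |Q z - Qstar z|)) ∧
      (∀ (Q : Z → ℝ) (z : Z),
        Filter.Tendsto (fun n : ℕ => T^[n] Q z) Filter.atTop (nhds (Qstar z))) := by
  obtain rfl : T = robustBellman γ r P := funext fun Q => funext (hT Q)
  have hcontr := robustBellman_contractingWith (r := r) hγ0 hγ1 hP0 hP1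
  refine ⟨ContractingWith.fixedPoint _ hcontr, hcontr.fixedPoint_isFixedPt,
    fun _ => hcontr.fixedPoint_unique, fun Q n => ?_,
    fun Q => tendsto_pi_nhds.1 (hcontr.tendsto_iterate_fixedPoint Q)⟩
  have h := hcontr.dist_iterate_fixedPoint_le Q n
  rw [dist_pi_eq_sup', dist_pi_eq_sup'] at h
  exact h

/-- Value iteration with the robust Harsanyi–Bellman operator converges geometrically
to the unique optimal robust value `Q*`. -/
theorem robust_harsanyi_bellman_convergence
    {Z : Type*} [Fintype Z] [Nonempty Z]
    {Pol Adv : Type*} [Nonempty Pol] [Nonempty Adv]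
    (γ : ℝ) (hγ0 : 0 ≤ γ) (hγ1 : γ < 1)
    (r : Pol → Adv → Z → ℝ) (C : ℝ)
    (hr : ∀ p q z, |r p q z| ≤ C)
    (P : Pol → Adv → Z → Z → ℝ)
    (hP0 : ∀ p q z z', 0 ≤ P p q z z')
    (hP1 : ∀ p q z, ∑ z' : Z, P p q z z' = 1)
    (T : (Z → ℝ) → (Z → ℝ))
    (hT : ∀ Q z, T Q z =
      ⨆ p : Pol, ⨅ q : Adv, (r p q z + γ * ∑ z' : Z, P p q z z' * Q z')) :
    ∃ Qstar : Z → ℝ, T Qstar = Qstar ∧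
      (∀ Q : Z → ℝ, T Q = Q → Q = Qstar) ∧
      (∀ (Q : Z → ℝ) (n : ℕ),
        (Finset.univ.sup' Finset.univ_nonempty fun z : Z => |T^[n] Q z - Qstar z|) ≤
          γ ^ n * (Finset.univ.sup' Finset.univ_nonempty fun z : Z => |Q z - Qstar z|)) ∧
      (∀ (Q : Z → ℝ) (z : Z),
        Filter.Tendsto (fun n : ℕ => T^[n] Q z) Filter.atTop (nhds (Qstar z))) :=
  robust_harsanyi_bellman_convergence_general γ hγ0 hγ1 r P hP0 hP1 T hT
end

section
/- Let E be a normed real vector space, let A be a finite type (the action set), let Q : A → ℝ, and let π : E → A → ℝ be such that for every a ∈ A the function y ↦ π y a is differentiable at x ∈ E and π x a > 0. Then the function y ↦ ∑_{a ∈ A} π y a · Q a is differentiable at x, and fderiv ℝ (fun y => ∑_{a ∈ A} π y a · Q a) x = ∑_{a ∈ A} (π x a · Q a) • fderiv ℝ (fun y => Real.log (π y a)) x. -/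
theorem smul_fderiv_log_eq_fderiv {E : Type*} [NormedAddCommGroup E] [NormedSpace ℝ E]
    {f : E → ℝ} {x : E} (hf : DifferentiableAt ℝ f x) (hx : f x ≠ 0) :
    f x • fderiv ℝ (fun y => Real.log (f y)) x = fderiv ℝ f x := by
  rw [(hf.hasFDerivAt.log hx).fderiv, smul_smul, mul_inv_cancel₀ hx, one_smul]

/-- Single-step score-function (policy gradient) identity:
`∇ ∑_a π(a) Q(a) = ∑_a π(a) Q(a) • ∇ log π(a)`. -/
theorem policy_gradient_score_function_identity
    {E : Type*} [NormedAddCommGroup E] [NormedSpace ℝ E]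
    {A : Type*} [Fintype A]
    (Q : A → ℝ) (pol : E → A → ℝ) (x : E)
    (hd : ∀ a, DifferentiableAt ℝ (fun y => pol y a) x)
    (hpos : ∀ a, 0 < pol x a) :
    DifferentiableAt ℝ (fun y => ∑ a : A, pol y a * Q a) x ∧
      fderiv ℝ (fun y => ∑ a : A, pol y a * Q a) x =
        ∑ a : A, (pol x a * Q a) • fderiv ℝ (fun y => Real.log (pol y a)) x := by
  have hterm : ∀ a, DifferentiableAt ℝ (fun y => pol y a * Q a) x :=
    fun a => (hd a).mul_const (Q a)
  refine ⟨.fun_sum fun a _ => hterm a, ?_⟩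
  rw [fderiv_fun_sum fun a _ => hterm a]
  refine Finset.sum_congr rfl fun a _ => ?_
  rw [fderiv_mul_const (hd a), mul_comm (pol x a), mul_smul,
    smul_fderiv_log_eq_fderiv (hd a) (hpos a).ne']
end
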